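/- (Deterministic reduction LP, classical case.) For a finite MDP with state space X, action space A, transition kernel p, cost c, and discount β ∈ [0,1): for any stationary policy given by a stochastic kernel π from X to A with induced occupation measure ν^γ = (1−β) Σ_t β^t (μ_t ⊗ π) where μ_{t+1}(y) = Σ_{x,a} p(y|x,a) μ_t(x)π(a|x), the measure ν = ν^γ satisfies ν(· × A) − β P(ν) = (1−β) μ₀, where P(ν)(y) = Σ_{x,a} p(y|x,a) ν(x,a). Conversely, any finite measure ν ≥ 0 on X × A satisfying this constraint is the occupation measure of the stationary policy obtained by disintegrating ν(x,a) = μ(x)π(a|x). -/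
import Mathlib

noncomputable section

def muSeq {X A : Type*} [Fintype X] [Fintype A]
    (p : X → A → X → ℝ) (π : X → A → ℝ) (μ0 : X → ℝ) : ℕ → X → ℝ
  | 0 => μ0
  | t + 1 => fun y => ∑ x, ∑ a, p x a y * (muSeq p π μ0 t x * π x a)

section aux
variable {X A : Type*} [Fintype X] [Fintype A]
  {p : X → A → X → ℝ} {π : X → A → ℝ} {μ : X → ℝ}

lemma muSeq_nonneg (hp0 : ∀ x a y, 0 ≤ p x a y) (hπ0 : ∀ x a, 0 ≤ π x a)
    (hμ : ∀ x, 0 ≤ μ x) : ∀ t x, 0 ≤ muSeq p π μ t x := by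
  intro t
  induction t with
  | zero => exact hμ
  | succ t ih =>
    intro y
    exact Finset.sum_nonneg fun x _ => Finset.sum_nonneg fun a _ =>
      mul_nonneg (hp0 _ _ _) (mul_nonneg (ih x) (hπ0 _ _))

lemma muSeq_mass (hp1 : ∀ x a, ∑ y, p x a y = 1) (hπ1 : ∀ x, ∑ a, π x a = 1) :
    ∀ t, ∑ x, muSeq p π μ t x = ∑ x, μ x := by
  intro t
  induction t with
  | zero => rfl
  | succ t ih =>
    calc ∑ y, ∑ x, ∑ a, p x a y * (muSeq p π μ t x * π x a)
        = ∑ x, ∑ y, ∑ a, p x a y * (muSeq p π μ t x * π x a) := Finset.sum_comm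
      _ = ∑ x, ∑ a, ∑ y, p x a y * (muSeq p π μ t x * π x a) :=
          Finset.sum_congr rfl fun x _ => Finset.sum_comm
      _ = ∑ x, ∑ a, muSeq p π μ t x * π x a := by
          refine Finset.sum_congr rfl fun x _ => Finset.sum_congr rfl fun a _ => ?_
          rw [← Finset.sum_mul, hp1, one_mul]
      _ = ∑ x, muSeq p π μ t x := by
          refine Finset.sum_congr rfl fun x _ => ?_
          rw [← Finset.mul_sum, hπ1, mul_one]
      _ = ∑ x, μ x := ih

lemma muSeq_le_one (hp0 : ∀ x a y, 0 ≤ p x a y) (hp1 : ∀ x a, ∑ y, p x a y = 1)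
    (hπ0 : ∀ x a, 0 ≤ π x a) (hπ1 : ∀ x, ∑ a, π x a = 1)
    (hμ : ∀ x, 0 ≤ μ x) (hμ1 : ∑ x, μ x = 1) : ∀ t x, muSeq p π μ t x ≤ 1 := by
  intro t x
  have h := Finset.single_le_sum (f := fun x => muSeq p π μ t x)
    (fun i _ => muSeq_nonneg hp0 hπ0 hμ t i) (Finset.mem_univ x)
  rw [muSeq_mass hp1 hπ1, hμ1] at h
  exact h

end aux

/-- (Deterministic reduction LP, classical case.) The occupation
measure of any stationary policy satisfies the LP constraint
`ν(·×A) − β P(ν) = (1−β) μ₀`, and conversely every nonnegative `ν` satisfying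
the constraint is the occupation measure of the stationary policy obtained by
disintegrating `ν(x,a) = μ(x) π(a|x)`. -/
theorem classical_occupation_LP {X A : Type*} [Fintype X] [Fintype A]
    [Nonempty A]
    (p : X → A → X → ℝ) (hp0 : ∀ x a y, 0 ≤ p x a y)
    (hp1 : ∀ x a, ∑ y, p x a y = 1)
    (μ0 : X → ℝ) (hμ00 : ∀ x, 0 ≤ μ0 x) (hμ01 : ∑ x, μ0 x = 1)
    (β : ℝ) (hβ0 : 0 ≤ β) (hβ1 : β < 1) :
    (∀ π : X → A → ℝ, (∀ x a, 0 ≤ π x a) → (∀ x, ∑ a, π x a = 1) →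
      ∀ y : X,
        (∑ a, ((1 - β) * ∑' t : ℕ, β ^ t * (muSeq p π μ0 t y * π y a)))
            - β * ∑ x, ∑ a,
                p x a y * ((1 - β) * ∑' t : ℕ, β ^ t * (muSeq p π μ0 t x * π x a))
          = (1 - β) * μ0 y) ∧
    (∀ ν : X → A → ℝ, (∀ x a, 0 ≤ ν x a) →
      (∀ y : X, (∑ a, ν y a) - β * ∑ x, ∑ a, p x a y * ν x a = (1 - β) * μ0 y) →
      ∃ π : X → A → ℝ, (∀ x a, 0 ≤ π x a) ∧ (∀ x, ∑ a, π x a = 1) ∧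
        (∀ x a, ν x a = (∑ b, ν x b) * π x a) ∧
        ∀ x a, ν x a = (1 - β) * ∑' t : ℕ, β ^ t * (muSeq p π μ0 t x * π x a)) := by
  have hgeo : Summable (fun t : ℕ => β ^ t) := summable_geometric_of_lt_one hβ0 hβ1
  -- generic summability facts
  have key : ∀ (π : X → A → ℝ), (∀ x a, 0 ≤ π x a) → (∀ x, ∑ a, π x a = 1) →
      (∀ x, Summable (fun t : ℕ => β ^ t * muSeq p π μ0 t x)) ∧
      (∀ x a, Summable (fun t : ℕ => β ^ t * (muSeq p π μ0 t x * π x a))) := by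
    intro π hπ0 hπ1
    have hπle : ∀ x a, π x a ≤ 1 := by
      intro x a
      have := Finset.single_le_sum (f := fun a => π x a) (fun i _ => hπ0 x i)
        (Finset.mem_univ a)
      rwa [hπ1] at this
    have hle := muSeq_le_one (μ := μ0) hp0 hp1 hπ0 hπ1 hμ00 hμ01
    have hnn := muSeq_nonneg (μ := μ0) hp0 hπ0 hμ00
    constructor
    · intro x
      refine Summable.of_nonneg_of_le (fun t => mul_nonneg (pow_nonneg hβ0 t) (hnn t x))
        (fun t => ?_) hgeo
      calc β ^ t * muSeq p π μ0 t x ≤ β ^ t * 1 :=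
            mul_le_mul_of_nonneg_left (hle t x) (pow_nonneg hβ0 t)
        _ = β ^ t := mul_one _
    · intro x a
      refine Summable.of_nonneg_of_le
        (fun t => mul_nonneg (pow_nonneg hβ0 t) (mul_nonneg (hnn t x) (hπ0 x a)))
        (fun t => ?_) hgeo
      calc β ^ t * (muSeq p π μ0 t x * π x a) ≤ β ^ t * 1 := by
            refine mul_le_mul_of_nonneg_left ?_ (pow_nonneg hβ0 t)
            exact mul_le_one₀ (hle t x) (hπ0 x a) (hπle x a)
        _ = β ^ t := mul_one _
  constructor
  · -- forward direction
    intro π hπ0 hπ1 y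
    obtain ⟨hS, hSa⟩ := key π hπ0 hπ1
    have step1 : (∑ a, ((1 - β) * ∑' t : ℕ, β ^ t * (muSeq p π μ0 t y * π y a)))
        = (1 - β) * ∑' t : ℕ, β ^ t * muSeq p π μ0 t y := by
      rw [← Finset.mul_sum, ← Summable.tsum_finsetSum (fun a _ => hSa y a)]
      congr 1
      refine tsum_congr fun t => ?_
      simp_rw [mul_comm (muSeq p π μ0 t y) (π y _)]
      rw [← Finset.mul_sum]
      rw [show (∑ a, π y a * muSeq p π μ0 t y) = (∑ a, π y a) * muSeq p π μ0 t y from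
        (Finset.sum_mul _ _ _).symm, hπ1, one_mul]
    have step2 : (∑ x, ∑ a, p x a y * ((1 - β) * ∑' t : ℕ, β ^ t * (muSeq p π μ0 t x * π x a)))
        = (1 - β) * ∑' t : ℕ, β ^ t * muSeq p π μ0 (t + 1) y := by
      have : ∀ x a, p x a y * ((1 - β) * ∑' t : ℕ, β ^ t * (muSeq p π μ0 t x * π x a))
          = (1 - β) * ∑' t : ℕ, p x a y * (β ^ t * (muSeq p π μ0 t x * π x a)) := by
        intro x a
        rw [tsum_mul_left]
        ring
      simp_rw [this, ← Finset.mul_sum]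
      congr 1
      have h1 : ∀ x, (∑ a, ∑' t : ℕ, p x a y * (β ^ t * (muSeq p π μ0 t x * π x a)))
          = ∑' t : ℕ, ∑ a, p x a y * (β ^ t * (muSeq p π μ0 t x * π x a)) :=
        fun x => (Summable.tsum_finsetSum (fun a _ => (hSa x a).mul_left _)).symm
      simp_rw [h1]
      rw [← Summable.tsum_finsetSum (fun x _ => summable_sum fun a _ => (hSa x a).mul_left _)]
      refine tsum_congr fun t => ?_
      simp only [muSeq, Finset.mul_sum]
      refine Finset.sum_congr rfl fun x _ => Finset.sum_congr rfl fun a _ => by ring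
    rw [step1, step2]
    have hshift : (∑' t : ℕ, β ^ t * muSeq p π μ0 t y)
        = μ0 y + β * ∑' t : ℕ, β ^ t * muSeq p π μ0 (t + 1) y := by
      rw [Summable.tsum_eq_zero_add (hS y)]
      simp only [pow_zero, one_mul, muSeq]
      congr 1
      rw [← tsum_mul_left]
      refine tsum_congr fun t => ?_
      ring
    rw [hshift]
    ring
  · -- converse
    intro ν hν0 hνc
    classical
    set μ : X → ℝ := fun x => ∑ a, ν x a with hμdef
    have hμnn : ∀ x, 0 ≤ μ x := fun x => Finset.sum_nonneg fun a _ => hν0 x a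
    set π : X → A → ℝ := fun x a => if μ x = 0 then (Fintype.card A : ℝ)⁻¹ else ν x a / μ x
      with hπdef
    have hcard : (0 : ℝ) < (Fintype.card A : ℝ) := by
      exact_mod_cast Fintype.card_pos
    have hπ0 : ∀ x a, 0 ≤ π x a := by
      intro x a
      by_cases h : μ x = 0 <;> simp only [hπdef, h, if_true, if_false]
      · positivity
      · exact div_nonneg (hν0 x a) (hμnn x)
    have hπ1 : ∀ x, ∑ a, π x a = 1 := by
      intro x
      by_cases h : μ x = 0
      · simp only [hπdef, h, if_true]
        rw [Finset.sum_const, Finset.card_univ, nsmul_eq_mul]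
        field_simp
      · simp only [hπdef, h, if_false]
        rw [← Finset.sum_div]
        exact div_self h
    have hdis : ∀ x a, ν x a = μ x * π x a := by
      intro x a
      by_cases h : μ x = 0
      · have : ν x a = 0 := by
          have := (Finset.sum_eq_zero_iff_of_nonneg (fun a _ => hν0 x a)).mp h
          exact this a (Finset.mem_univ a)
        simp [this, h]
      · simp only [hπdef, h, if_false]
        field_simp
    -- total mass of ν is 1
    have hmass : ∑ x, μ x = 1 := by
      have hsum := Finset.sum_congr rfl fun y (_ : y ∈ Finset.univ) => hνc y
      rw [Finset.sum_sub_distrib, ← Finset.mul_sum, ← Finset.mul_sum] at hsum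
      have hswap : (∑ y, ∑ x, ∑ a, p x a y * ν x a) = ∑ x, μ x := by
        calc (∑ y, ∑ x, ∑ a, p x a y * ν x a)
            = ∑ x, ∑ y, ∑ a, p x a y * ν x a := Finset.sum_comm
          _ = ∑ x, ∑ a, ∑ y, p x a y * ν x a :=
              Finset.sum_congr rfl fun x _ => Finset.sum_comm
          _ = ∑ x, ∑ a, ν x a := by
              refine Finset.sum_congr rfl fun x _ => Finset.sum_congr rfl fun a _ => ?_
              rw [← Finset.sum_mul, hp1, one_mul]
      rw [hswap, hμ01, mul_one] at hsum
      have hβne : (1 : ℝ) - β ≠ 0 := by linarith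
      have : (1 - β) * ∑ x, μ x = (1 - β) * 1 := by rw [mul_one]; linarith [hsum]
      exact mul_left_cancel₀ hβne this
    -- key recursion
    have hkey : ∀ y, μ y = (1 - β) * μ0 y + β * muSeq p π μ 1 y := by
      intro y
      have h := hνc y
      simp only [muSeq]
      have h2 : (∑ x, ∑ a, p x a y * ν x a) = ∑ x, ∑ a, p x a y * (μ x * π x a) := by
        refine Finset.sum_congr rfl fun x _ => Finset.sum_congr rfl fun a _ => ?_
        rw [← hdis]
      rw [h2] at h
      have h3 : μ y = ∑ a, ν y a := rfl
      linarith [h]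
    have hstep : ∀ n y, muSeq p π μ n y
        = (1 - β) * muSeq p π μ0 n y + β * muSeq p π μ (n + 1) y := by
      intro n
      induction n with
      | zero => exact hkey
      | succ n ih =>
        intro y
        calc muSeq p π μ (n + 1) y
            = ∑ x, ∑ a, p x a y * (muSeq p π μ n x * π x a) := rfl
          _ = ∑ x, ∑ a, p x a y *
              (((1 - β) * muSeq p π μ0 n x + β * muSeq p π μ (n + 1) x) * π x a) := by
              refine Finset.sum_congr rfl fun x _ => Finset.sum_congr rfl fun a _ => ?_
              rw [← ih x]
          _ = (1 - β) * (∑ x, ∑ a, p x a y * (muSeq p π μ0 n x * π x a))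
              + β * (∑ x, ∑ a, p x a y * (muSeq p π μ (n + 1) x * π x a)) := by
              simp only [Finset.mul_sum, ← Finset.sum_add_distrib]
              refine Finset.sum_congr rfl fun x _ => Finset.sum_congr rfl fun a _ => by ring
          _ = (1 - β) * muSeq p π μ0 (n + 1) y + β * muSeq p π μ (n + 2) y := rfl
    have htel : ∀ n y, μ y = (1 - β) * (∑ t ∈ Finset.range n, β ^ t * muSeq p π μ0 t y)
        + β ^ n * muSeq p π μ n y := by
      intro n
      induction n with
      | zero => intro y; simp [muSeq]
      | succ n ih =>
        intro y
        calc μ y = (1 - β) * (∑ t ∈ Finset.range n, β ^ t * muSeq p π μ0 t y)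
              + β ^ n * muSeq p π μ n y := ih y
          _ = _ := by rw [hstep n y, Finset.sum_range_succ]; ring
    -- limit
    have hμle : ∀ n y, muSeq p π μ n y ≤ 1 := muSeq_le_one hp0 hp1 hπ0 hπ1 hμnn hmass
    have hμnn' : ∀ n y, 0 ≤ muSeq p π μ n y := muSeq_nonneg hp0 hπ0 hμnn
    have hlim : ∀ y, Filter.Tendsto (fun n => β ^ n * muSeq p π μ n y)
        Filter.atTop (nhds 0) := by
      intro y
      refine squeeze_zero (fun n => mul_nonneg (pow_nonneg hβ0 n) (hμnn' n y))
        (fun n => ?_) (tendsto_pow_atTop_nhds_zero_of_lt_one hβ0 hβ1)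
      calc β ^ n * muSeq p π μ n y ≤ β ^ n * 1 :=
            mul_le_mul_of_nonneg_left (hμle n y) (pow_nonneg hβ0 n)
        _ = β ^ n := mul_one _
    obtain ⟨hS, hSa⟩ := key π hπ0 hπ1
    have hμeq : ∀ y, μ y = (1 - β) * ∑' t : ℕ, β ^ t * muSeq p π μ0 t y := by
      intro y
      have h1 : Filter.Tendsto
          (fun n => (1 - β) * ∑ t ∈ Finset.range n, β ^ t * muSeq p π μ0 t y)
          Filter.atTop (nhds ((1 - β) * ∑' t : ℕ, β ^ t * muSeq p π μ0 t y)) :=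
        ((hS y).hasSum.tendsto_sum_nat).const_mul _
      have h2 : Filter.Tendsto
          (fun n => (1 - β) * ∑ t ∈ Finset.range n, β ^ t * muSeq p π μ0 t y)
          Filter.atTop (nhds (μ y)) := by
        have heq : (fun n => (1 - β) * ∑ t ∈ Finset.range n, β ^ t * muSeq p π μ0 t y)
            = fun n => μ y - β ^ n * muSeq p π μ n y := by
          funext n
          rw [htel n y]
          ring
        rw [heq]
        simpa using tendsto_const_nhds.sub (hlim y)
      exact (tendsto_nhds_unique h1 h2).symm
    refine ⟨π, hπ0, hπ1, hdis, ?_⟩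
    intro x a
    calc ν x a = μ x * π x a := hdis x a
      _ = ((1 - β) * ∑' t : ℕ, β ^ t * muSeq p π μ0 t x) * π x a := by rw [← hμeq]
      _ = (1 - β) * ((∑' t : ℕ, β ^ t * muSeq p π μ0 t x) * π x a) := by ring
      _ = (1 - β) * ∑' t : ℕ, (β ^ t * muSeq p π μ0 t x) * π x a := by rw [tsum_mul_right]
      _ = (1 - β) * ∑' t : ℕ, β ^ t * (muSeq p π μ0 t x * π x a) := by
          congr 1; exact tsum_congr fun t => by ring
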